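/- arXiv:2309.16282 — 2 statements merged into one kernel-verified Lean document; each statement's English description precedes it below -/
import Mathlib

section
/- Correctness of AgEncID decryption: Let g be a generator of an additive cyclic group G of prime order p, α, γ, t ∈ ℤ_p, and define g_i = α^i • g for i ∈ {1,…,2n}, v = γ • g, d_i = γ • g_i. For a set S ⊆ {1,…,n}, let K_S = ∑_{j∈S} g_{n+1−j}, and for i ∈ S let b_{i,S} = ∑_{j∈S, j≠i} g_{n+1−j+i}. Given message m ∈ G_T, let c₁ = t•g, c₂ = t•(v + K_S), c₃ = m·ê(g_n, t•g₁). Then c₃ · ê(d_i + b_{i,S}, c₁) / ê(g_i, c₂) = m, for any bilinear map ê : G × G → G_T satisfying ê(g₁, g_n) = ê(g, g_{n+1}). -/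
/-!
A pairing additive in each argument is balanced over `ZMod p`, because `a : ZMod p` acts as the
natural number `a.val`; so every pairing in the decryption formula is `e g (s • g)` for an
exponent `s`, and the claim becomes an identity in `ZMod p`. There, multiplying
`∑_{j ∈ S} α^(n+1-j)` by `α^i` gives the terms `α^(n+1-j+i)`, `j ≠ i`, of `b` plus the
single term `α^(n+1)`, which the factor `ê(g_n, t • g₁)` of `c₃` cancels.
-/

section Pairing

variable {G GT : Type*} [AddCommGroup G] [CommGroup GT] (e : G → G → GT)

theorem pairing_nsmul_left (hleft : ∀ x₁ x₂ y, e (x₁ + x₂) y = e x₁ y * e x₂ y)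
    (k : ℕ) (x y : G) : e (k • x) y = e x y ^ k := by
  apply Additive.ofMul.injective
  rw [ofMul_pow]
  exact (AddMonoidHom.mk' (fun x => Additive.ofMul (e x y)) (hleft · · y)).map_nsmul k x

theorem pairing_nsmul_right (hright : ∀ x y₁ y₂, e x (y₁ + y₂) = e x y₁ * e x y₂)
    (k : ℕ) (x y : G) : e x (k • y) = e x y ^ k :=
  pairing_nsmul_left (fun y x => e x y) (fun y₁ y₂ x => hright x y₁ y₂) k y x

variable {n : ℕ} [NeZero n] [Module (ZMod n) G]
  (hleft : ∀ x₁ x₂ y, e (x₁ + x₂) y = e x₁ y * e x₂ y)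
  (hright : ∀ x y₁ y₂, e x (y₁ + y₂) = e x y₁ * e x y₂)
include hleft hright

theorem pairing_smul_left_eq_smul_right (a : ZMod n) (x y : G) : e (a • x) y = e x (a • y) := by
  rw [← ZMod.natCast_zmod_val a, Nat.cast_smul_eq_nsmul, Nat.cast_smul_eq_nsmul,
    pairing_nsmul_left e hleft, pairing_nsmul_right e hright]

theorem pairing_smul_smul (a b : ZMod n) (x : G) : e (a • x) (b • x) = e x ((a * b) • x) := by
  rw [pairing_smul_left_eq_smul_right e hleft hright, smul_smul]

end Pairing

theorem pow_mul_sum_pow_sub {R : Type*} [CommSemiring R] (α : R) {S : Finset ℕ} {i n : ℕ}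
    (hi : i ∈ S) (hin : i ≤ n + 1) :
    α ^ i * ∑ j ∈ S, α ^ (n + 1 - j) =
      α ^ (n + 1) + ∑ j ∈ S.erase i, α ^ (n + 1 - j + i) := by
  rw [Finset.mul_sum, ← Finset.add_sum_erase _ _ hi, ← pow_add, Nat.add_sub_cancel' hin]
  simp only [← pow_add, add_comm i]

theorem agEncID_correctness_general {p : ℕ} [Fact p.Prime]
    {G : Type*} [AddCommGroup G] [Module (ZMod p) G]
    {GT : Type*} [CommGroup GT]
    (e : G → G → GT)
    (hleft : ∀ g₁ g₂ g₃ : G, e (g₁ + g₂) g₃ = e g₁ g₃ * e g₂ g₃)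
    (hright : ∀ g₁ g₂ g₃ : G, e g₁ (g₂ + g₃) = e g₁ g₂ * e g₁ g₃)
    (g : G)
    (α γ t : ZMod p) (n : ℕ)
    (gi : ℕ → G) (hgi : ∀ k, gi k = (α ^ k) • g)
    (v : G) (hv : v = γ • g)
    (d : ℕ → G) (hd : ∀ k, d k = γ • gi k)
    (S : Finset ℕ) (hS : S ⊆ Finset.Icc 1 n) (i : ℕ) (hi : i ∈ S)
    (KS : G) (hKS : KS = ∑ j ∈ S, gi (n + 1 - j))
    (b : G) (hb : b = ∑ j ∈ S.erase i, gi (n + 1 - j + i))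
    (m : GT)
    (c₁ : G) (hc₁ : c₁ = t • g)
    (c₂ : G) (hc₂ : c₂ = t • (v + KS))
    (c₃ : GT) (hc₃ : c₃ = m * e (gi n) (t • gi 1)) :
    c₃ * e (d i + b) c₁ / e (gi i) c₂ = m := by
  have hin : i ≤ n + 1 := (Finset.mem_Icc.mp (hS hi)).2.trans n.le_succ
  have hdb : d i + b = (γ * α ^ i + ∑ j ∈ S.erase i, α ^ (n + 1 - j + i)) • g := by
    simp only [hd, hb, hgi, smul_smul, add_smul, Finset.sum_smul]
  have hc₂' : c₂ = (t * (γ + ∑ j ∈ S, α ^ (n + 1 - j))) • g := by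
    simp only [hc₂, hv, hKS, hgi, mul_add, add_smul, Finset.mul_sum, Finset.sum_smul, smul_add,
      Finset.smul_sum, smul_smul]
  have hexp :
      α ^ n * (t * α ^ 1) + (γ * α ^ i + ∑ j ∈ S.erase i, α ^ (n + 1 - j + i)) * t =
        α ^ i * (t * (γ + ∑ j ∈ S, α ^ (n + 1 - j))) := by
    linear_combination (-t) * pow_mul_sum_pow_sub α hi hin
  suffices e (gi n) (t • gi 1) * e (d i + b) c₁ = e (gi i) c₂ by
    rw [hc₃, mul_assoc, this, mul_div_cancel_right]
  have balanced := pairing_smul_smul (n := p) e hleft hright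
  rw [hdb, hc₂', hc₁, hgi n, hgi 1, hgi i, smul_smul, balanced, balanced, balanced, ← hright,
    ← add_smul, hexp]

theorem agEncID_correctness {p : ℕ} [Fact p.Prime]
    {G : Type*} [AddCommGroup G] [Module (ZMod p) G]
    {GT : Type*} [CommGroup GT]
    (e : G → G → GT)
    (hleft : ∀ g₁ g₂ g₃ : G, e (g₁ + g₂) g₃ = e g₁ g₃ * e g₂ g₃)
    (hright : ∀ g₁ g₂ g₃ : G, e g₁ (g₂ + g₃) = e g₁ g₂ * e g₁ g₃)
    (g : G) (hgen : ∀ x : G, ∃ c : ZMod p, x = c • g)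
    (α γ t : ZMod p) (n : ℕ) (hn : 0 < n)
    (gi : ℕ → G) (hgi : ∀ k, gi k = (α ^ k) • g)
    (v : G) (hv : v = γ • g)
    (d : ℕ → G) (hd : ∀ k, d k = γ • gi k)
    (S : Finset ℕ) (hS : S ⊆ Finset.Icc 1 n) (i : ℕ) (hi : i ∈ S)
    (KS : G) (hKS : KS = ∑ j ∈ S, gi (n + 1 - j))
    (b : G) (hb : b = ∑ j ∈ S.erase i, gi (n + 1 - j + i))
    (m : GT)
    (c₁ : G) (hc₁ : c₁ = t • g)
    (c₂ : G) (hc₂ : c₂ = t • (v + KS))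
    (c₃ : GT) (hc₃ : c₃ = m * e (gi n) (t • gi 1))
    (hDHE : e (gi 1) (gi n) = e g (gi (n + 1))) :
    c₃ * e (d i + b) c₁ / e (gi i) c₂ = m :=
  agEncID_correctness_general e hleft hright g α γ t n gi hgi v hv d hd S hS i hi KS hKS b hb m c₁
    hc₁ c₂ hc₂ c₃ hc₃
end

section
/- With notation as in the AgEncID scheme, ê(d_i + b_{i,S}, c₁) / ê(g_i, c₂) = ê(g_{n+1}, t•g)⁻¹, where d_i = γ•g_i, b_{i,S} = ∑_{j∈S, j≠i} g_{n+1−j+i}, c₁ = t•g, c₂ = t•(γ•g + ∑_{j∈S} g_{n+1−j}), and g_k = α^k • g. -/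
/-!
Every group element occurring in the statement is an integer multiple of `g`, so by
bilinearity each pairing is a power of `ê(g, g)` and the claim becomes an identity of integer
exponents. There the cross term `j = i` of `c₂`, namely `α^i · α^(n+1-i) = α^(n+1)`, is the only
one not cancelled by `b_{i,S}`.
-/

section Pairing

variable {G₁ G₂ GT : Type*} [Group GT] (e : G₁ → G₂ → GT)

theorem pairing_zsmul_left [AddGroup G₁] (hleft : ∀ x₁ x₂ y, e (x₁ + x₂) y = e x₁ y * e x₂ y)
    (a : ℤ) (x : G₁) (y : G₂) : e (a • x) y = e x y ^ a :=
  congrArg Additive.toMul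
    (map_zsmul (AddMonoidHom.mk' (fun x => Additive.ofMul (e x y)) (hleft · · y)) a x)

theorem pairing_zsmul_right [AddGroup G₂] (hright : ∀ x y₁ y₂, e x (y₁ + y₂) = e x y₁ * e x y₂)
    (c : ℤ) (x : G₁) (y : G₂) : e x (c • y) = e x y ^ c :=
  congrArg Additive.toMul
    (map_zsmul (AddMonoidHom.mk' (fun y => Additive.ofMul (e x y)) (hright x)) c y)

theorem pairing_zsmul_zsmul [AddGroup G₁] [AddGroup G₂]
    (hleft : ∀ x₁ x₂ y, e (x₁ + x₂) y = e x₁ y * e x₂ y)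
    (hright : ∀ x y₁ y₂, e x (y₁ + y₂) = e x y₁ * e x y₂) (a c : ℤ) (x : G₁) (y : G₂) :
    e (a • x) (c • y) = e x y ^ (a * c) := by
  rw [pairing_zsmul_left e hleft, pairing_zsmul_right e hright, ← zpow_mul, mul_comm]

end Pairing

theorem agEncID_exponent_identity {R : Type*} [CommRing R] (α γ : R) (S : Finset ℕ) {n i : ℕ}
    (hi : i ∈ S) (hin : i ≤ n + 1) :
    γ * α ^ i + ∑ j ∈ S.erase i, α ^ (n + 1 - j + i)
      = α ^ i * (γ + ∑ j ∈ S, α ^ (n + 1 - j)) - α ^ (n + 1) := by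
  have hcross : α ^ i * α ^ (n + 1 - i) = α ^ (n + 1) := by
    rw [← pow_add, Nat.add_sub_cancel' hin]
  rw [← Finset.add_sum_erase S _ hi, mul_add, mul_add, hcross, Finset.mul_sum]
  simp only [pow_add, mul_comm (α ^ i)]
  ring

theorem agEncID_pairing_ratio_general
    {G : Type*} [AddCommGroup G]
    {GT : Type*} [CommGroup GT]
    (e : G → G → GT)
    (hleft : ∀ g₁ g₂ g₃ : G, e (g₁ + g₂) g₃ = e g₁ g₃ * e g₂ g₃)
    (hright : ∀ g₁ g₂ g₃ : G, e g₁ (g₂ + g₃) = e g₁ g₂ * e g₁ g₃)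
    (g : G) (α γ t : ℤ) (n : ℕ)
    (gi : ℕ → G) (hgi : ∀ k, gi k = (α ^ k) • g)
    (d : ℕ → G) (hd : ∀ k, d k = γ • gi k)
    (S : Finset ℕ) (hS : S ⊆ Finset.Icc 1 n) (i : ℕ) (hi : i ∈ S)
    (b : G) (hb : b = ∑ j ∈ S.erase i, gi (n + 1 - j + i))
    (c₁ : G) (hc₁ : c₁ = t • g)
    (c₂ : G) (hc₂ : c₂ = t • (γ • g + ∑ j ∈ S, gi (n + 1 - j))) :
    e (d i + b) c₁ / e (gi i) c₂ = (e (gi (n + 1)) (t • g))⁻¹ := by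
  have hin : i ≤ n + 1 := ((Finset.mem_Icc.mp (hS hi)).2).trans n.le_succ
  have hdb : d i + b = (γ * α ^ i + ∑ j ∈ S.erase i, α ^ (n + 1 - j + i)) • g := by
    simp only [hd, hb, hgi, add_smul, Finset.sum_smul, smul_smul]
  have hc₂' : c₂ = (t * (γ + ∑ j ∈ S, α ^ (n + 1 - j))) • g := by
    simp only [hc₂, hgi, smul_add, Finset.smul_sum, smul_smul, mul_add, Finset.mul_sum, add_smul,
      Finset.sum_smul]
  rw [hdb, hc₁, hc₂', hgi, hgi, pairing_zsmul_zsmul e hleft hright,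
    pairing_zsmul_zsmul e hleft hright, pairing_zsmul_zsmul e hleft hright, div_eq_mul_inv,
    ← zpow_neg, ← zpow_neg, ← zpow_add, agEncID_exponent_identity α γ S hi hin]
  congr 1
  ring

theorem agEncID_pairing_ratio
    {G : Type*} [AddCommGroup G]
    {GT : Type*} [CommGroup GT]
    (e : G → G → GT)
    (hleft : ∀ g₁ g₂ g₃ : G, e (g₁ + g₂) g₃ = e g₁ g₃ * e g₂ g₃)
    (hright : ∀ g₁ g₂ g₃ : G, e g₁ (g₂ + g₃) = e g₁ g₂ * e g₁ g₃)
    (g : G) (α γ t : ℤ) (n : ℕ) (hn : 0 < n)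
    (gi : ℕ → G) (hgi : ∀ k, gi k = (α ^ k) • g)
    (d : ℕ → G) (hd : ∀ k, d k = γ • gi k)
    (S : Finset ℕ) (hS : S ⊆ Finset.Icc 1 n) (i : ℕ) (hi : i ∈ S)
    (b : G) (hb : b = ∑ j ∈ S.erase i, gi (n + 1 - j + i))
    (c₁ : G) (hc₁ : c₁ = t • g)
    (c₂ : G) (hc₂ : c₂ = t • (γ • g + ∑ j ∈ S, gi (n + 1 - j))) :
    e (d i + b) c₁ / e (gi i) c₂ = (e (gi (n + 1)) (t • g))⁻¹ :=
  agEncID_pairing_ratio_general e hleft hright g α γ t n gi hgi d hd S hS i hi b hb c₁ hc₁ c₂ hc₂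
end
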